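/- arXiv:2401.06091 — 5 statements merged into one kernel-verified Lean document; each statement's English description precedes it below -/
import Mathlib

section
/- For a binary classifier f with continuous score distribution, AUPRC(f) = 1 − P(y = 0) · E_{t ~ f(x)|y=1}[ FPR(f, t) / P(f(x) > t) ], where the expectation is over the distribution of scores assigned to positive samples. -/
open MeasureTheory

/-! Since `FR = py · TPR + (1 - py) · FPR`, the precision satisfies
`Prec · p₊ = p₊ - (1 - py) · (FPR / FR) · p₊` wherever `p₊ ≠ 0`, and both sides vanish where
`p₊ = 0`. Integrating against `dτ` over `(0, 1)` and using `∫ p₊ = 1` gives the formula; the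
ratio `FPR / FR` is bounded by `(1 - py)⁻¹`, which makes the right-hand integrand integrable. -/

theorem continuous_intervalIntegral_left {f : ℝ → ℝ} (hf : Continuous f) (b : ℝ) :
    Continuous fun τ => ∫ t in τ..b, f t := by
  simp_rw [intervalIntegral.integral_symm b]
  exact (intervalIntegral.continuous_primitive (fun _ _ => hf.intervalIntegrable _ _) b).neg

section Mixture

variable {a u v : ℝ}

theorem abs_div_mix_le_inv (ha0 : 0 ≤ a) (ha1 : a < 1) (hu : 0 ≤ u) (hv : 0 ≤ v) :
    |v / (a * u + (1 - a) * v)| ≤ (1 - a)⁻¹ := by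
  have h1a : 0 < 1 - a := by linarith
  have hmix : 0 ≤ a * u + (1 - a) * v := by positivity
  rw [abs_of_nonneg (div_nonneg hv hmix)]
  rcases hmix.eq_or_lt with hzero | hmix_pos
  · rw [← hzero, div_zero]
    positivity
  · rw [div_le_iff₀ hmix_pos, inv_mul_eq_div, le_div_iff₀ h1a]
    nlinarith [mul_nonneg ha0 hu]

theorem div_mix_mul_eq_sub (p : ℝ) (h : p ≠ 0 → a * u + (1 - a) * v ≠ 0) :
    a * u / (a * u + (1 - a) * v) * p = p - (1 - a) * (v / (a * u + (1 - a) * v) * p) := by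
  rcases eq_or_ne p 0 with rfl | hp
  · ring
  · field_simp [h hp]
    ring

end Mixture

theorem setIntegral_div_mix_mul_eq_sub {α : Type*} [MeasurableSpace α] {μ : Measure α}
    {s : Set α} (hs : MeasurableSet s) {a : ℝ} (ha0 : 0 ≤ a) (ha1 : a < 1) {p u v : α → ℝ}
    (hp : IntegrableOn p s μ) (hu : ∀ t ∈ s, 0 ≤ u t) (hv : ∀ t ∈ s, 0 ≤ v t)
    (hratio : AEStronglyMeasurable (fun t => v t / (a * u t + (1 - a) * v t)) (μ.restrict s))
    (hmix : ∀ t ∈ s, p t ≠ 0 → a * u t + (1 - a) * v t ≠ 0) :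
    ∫ t in s, a * u t / (a * u t + (1 - a) * v t) * p t ∂μ
      = ∫ t in s, p t ∂μ - (1 - a) * ∫ t in s, v t / (a * u t + (1 - a) * v t) * p t ∂μ := by
  have hint : IntegrableOn (fun t => v t / (a * u t + (1 - a) * v t) * p t) s μ := by
    refine hp.bdd_mul (c := (1 - a)⁻¹) hratio
      ((ae_restrict_iff' hs).2 (.of_forall fun t ht => ?_))
    exact abs_div_mix_le_inv ha0 ha1 (hu t ht) (hv t ht)
  rw [← integral_const_mul, ← integral_sub hp (hint.const_mul _)]
  exact setIntegral_congr_fun hs fun t ht => div_mix_mul_eq_sub (p t) (hmix t ht)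

theorem auprc_expectation_form_general
    (p_pos p_neg TPR FPR FR Prec : ℝ → ℝ) (py : ℝ)
    (hpy0 : 0 < py) (hpy1 : py < 1)
    (hpos : ∀ t, 0 ≤ p_pos t) (hneg : ∀ t, 0 ≤ p_neg t)
    (hcpos : Continuous p_pos) (hcneg : Continuous p_neg)
    (hpos_one : (∫ t in (0:ℝ)..1, p_pos t) = 1)
    (hTPR : ∀ τ, TPR τ = ∫ t in τ..1, p_pos t)
    (hFPR : ∀ τ, FPR τ = ∫ t in τ..1, p_neg t)
    (hFR : ∀ τ, FR τ = py * TPR τ + (1 - py) * FPR τ)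
    (hFRpos : ∀ t ∈ Set.Ioo (0:ℝ) 1, p_pos t ≠ 0 → 0 < FR t)
    (hPrec : ∀ τ, Prec τ = py * TPR τ / FR τ) :
    (∫ τ in (0:ℝ)..1, Prec τ * p_pos τ)
      = 1 - (1 - py) * ∫ t in (0:ℝ)..1, (FPR t / FR t) * p_pos t := by
  have hTPRc : Continuous TPR := funext hTPR ▸ continuous_intervalIntegral_left hcpos 1
  have hFPRc : Continuous FPR := funext hFPR ▸ continuous_intervalIntegral_left hcneg 1
  have hTPR_nonneg : ∀ τ ∈ Set.Ioo (0:ℝ) 1, 0 ≤ TPR τ := fun τ hτ =>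
    hTPR τ ▸ intervalIntegral.integral_nonneg hτ.2.le fun t _ => hpos t
  have hFPR_nonneg : ∀ τ ∈ Set.Ioo (0:ℝ) 1, 0 ≤ FPR τ := fun τ hτ =>
    hFPR τ ▸ intervalIntegral.integral_nonneg hτ.2.le fun t _ => hneg t
  simp only [intervalIntegral.integral_of_le zero_le_one, integral_Ioc_eq_integral_Ioo,
    hPrec, hFR] at hpos_one hFRpos ⊢
  rw [setIntegral_div_mix_mul_eq_sub measurableSet_Ioo hpy0.le hpy1
    (hcpos.integrableOn_Icc.mono_set Set.Ioo_subset_Icc_self) hTPR_nonneg hFPR_nonneg ?_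
    fun t ht hp => (hFRpos t ht hp).ne', hpos_one]
  exact (hFPRc.measurable.div (by fun_prop)).aestronglyMeasurable

/-- AUPRC(f) = 1 − P(y=0) · E_{t ~ f(x)|y=1}[FPR(f,t)/P(f(x)>t)].
With conditional score densities p₊, p₋ on (0,1), TPR(τ) = ∫_τ^1 p₊, FPR(τ) = ∫_τ^1 p₋,
firing rate FR(τ) = py·TPR(τ) + (1-py)·FPR(τ) = P(f(x) > τ), and precision
Prec(τ) = py·TPR(τ)/FR(τ), the AUPRC = ∫ Prec d(TPR) = ∫₀¹ Prec(τ)·p₊(τ) dτ. -/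
theorem auprc_expectation_form
    (p_pos p_neg TPR FPR FR Prec : ℝ → ℝ) (py : ℝ)
    (hpy0 : 0 < py) (hpy1 : py < 1)
    (hpos : ∀ t, 0 ≤ p_pos t) (hneg : ∀ t, 0 ≤ p_neg t)
    (hcpos : Continuous p_pos) (hcneg : Continuous p_neg)
    (hpos_one : (∫ t in (0:ℝ)..1, p_pos t) = 1)
    (hneg_one : (∫ t in (0:ℝ)..1, p_neg t) = 1)
    (hTPR : ∀ τ, TPR τ = ∫ t in τ..1, p_pos t)
    (hFPR : ∀ τ, FPR τ = ∫ t in τ..1, p_neg t)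
    (hFR : ∀ τ, FR τ = py * TPR τ + (1 - py) * FPR τ)
    (hFRpos : ∀ t ∈ Set.Ioo (0:ℝ) 1, p_pos t ≠ 0 → 0 < FR t)
    (hPrec : ∀ τ, Prec τ = py * TPR τ / FR τ) :
    (∫ τ in (0:ℝ)..1, Prec τ * p_pos τ)
      = 1 - (1 - py) * ∫ t in (0:ℝ)..1, (FPR t / FR t) * p_pos t :=
  auprc_expectation_form_general p_pos p_neg TPR FPR FR Prec py hpy0 hpy1 hpos hneg hcpos hcneg
    hpos_one hTPR hFPR hFR hFRpos hPrec
end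

section
/- Let a finite dataset of N distinct scores with binary labels be sorted in increasing order of score, and let M be the set of indices i such that positions i and i+1 form an incorrectly ranked adjacent pair. For i ∈ M, let f_i' denote the score assignment obtained from f by swapping the scores at positions i and i+1. Then the empirical AUROC satisfies AUROC(f_i') = AUROC(f_j') for all i, j ∈ M. -/
open Finset

/-- Empirical AUROC: the fraction of (positive, negative) pairs ranked correctly
(positive sample assigned a strictly higher score). -/
noncomputable def empAUROC {N : ℕ} (y : Fin N → Bool) (f : Fin N → ℝ) : ℝ :=
  ((univ.filter (fun p : Fin N × Fin N =>
      y p.1 = true ∧ y p.2 = false ∧ f p.2 < f p.1)).card : ℝ) /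
    (((univ.filter (fun k : Fin N => y k = true)).card : ℝ) *
      ((univ.filter (fun k : Fin N => y k = false)).card : ℝ))

lemma auroc_swap_count {N : ℕ} (s : Fin N → ℝ) (y : Fin N → Bool) (hs : StrictMono s)
    (i : ℕ) (hi : i + 1 < N)
    (hyi : y ⟨i, Nat.lt_of_succ_lt hi⟩ = true)
    (hyi1 : y ⟨i + 1, hi⟩ = false) :
    (univ.filter (fun p : Fin N × Fin N =>
      y p.1 = true ∧ y p.2 = false ∧
        (s ∘ Equiv.swap ⟨i, Nat.lt_of_succ_lt hi⟩ ⟨i + 1, hi⟩) p.2 <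
        (s ∘ Equiv.swap ⟨i, Nat.lt_of_succ_lt hi⟩ ⟨i + 1, hi⟩) p.1)).card
    = (univ.filter (fun p : Fin N × Fin N =>
      y p.1 = true ∧ y p.2 = false ∧ s p.2 < s p.1)).card + 1 := by
  set a : Fin N := ⟨i, Nat.lt_of_succ_lt hi⟩ with ha
  set b : Fin N := ⟨i + 1, hi⟩ with hb
  have hab : a ≠ b := by simp [ha, hb, Fin.ext_iff]
  have hsab : s a < s b := hs (by simp [ha, hb, Fin.lt_def])
  have hswa : Equiv.swap a b a = b := Equiv.swap_apply_left a b
  have hswb : Equiv.swap a b b = a := Equiv.swap_apply_right a b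
  have hswo : ∀ x : Fin N, x ≠ a → x ≠ b → Equiv.swap a b x = x :=
    fun x h1 h2 => Equiv.swap_apply_of_ne_of_ne h1 h2
  have hvala : ∀ x : Fin N, x ≠ a → (x : ℕ) ≠ i := by
    intro x h hc; exact h (Fin.ext hc)
  have hvalb : ∀ x : Fin N, x ≠ b → (x : ℕ) ≠ i + 1 := by
    intro x h hc; exact h (Fin.ext hc)
  have key1 : ∀ x : Fin N, x ≠ a → x ≠ b → (s x < s b ↔ s x < s a) := by
    intro x h1 h2
    rw [hs.lt_iff_lt, hs.lt_iff_lt, Fin.lt_def, Fin.lt_def]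
    have := hvala x h1; have := hvalb x h2
    simp only [ha, hb]; omega
  have key2 : ∀ x : Fin N, x ≠ a → x ≠ b → (s b < s x ↔ s a < s x) := by
    intro x h1 h2
    rw [hs.lt_iff_lt, hs.lt_iff_lt, Fin.lt_def, Fin.lt_def]
    have := hvala x h1; have := hvalb x h2
    simp only [ha, hb]; omega
  have hset : (univ.filter (fun p : Fin N × Fin N =>
      y p.1 = true ∧ y p.2 = false ∧
        (s ∘ Equiv.swap a b) p.2 < (s ∘ Equiv.swap a b) p.1))
      = insert (a, b) (univ.filter (fun p : Fin N × Fin N =>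
          y p.1 = true ∧ y p.2 = false ∧ s p.2 < s p.1)) := by
    ext ⟨p1, p2⟩
    simp only [mem_filter, mem_insert, mem_univ, true_and, Function.comp_apply,
      Prod.mk.injEq]
    by_cases h1a : p1 = a
    · subst h1a
      by_cases h2a : p2 = a
      · subst h2a
        simp [hswa, hyi, hab, lt_irrefl]
      · by_cases h2b : p2 = b
        · subst h2b
          simp [hswa, hswb, hsab, hyi, hyi1, lt_irrefl]
        · rw [hswa, hswo p2 h2a h2b]
          simp only [h2b, and_false, false_or]
          constructor
          · rintro ⟨hy1, hy2, hlt⟩; exact ⟨hy1, hy2, (key1 p2 h2a h2b).mp hlt⟩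
          · rintro ⟨hy1, hy2, hlt⟩; exact ⟨hy1, hy2, (key1 p2 h2a h2b).mpr hlt⟩
    · by_cases h1b : p1 = b
      · subst h1b
        simp [hab.symm, hswb, hswa, hyi1]
      · rw [hswo p1 h1a h1b]
        simp only [h1a, false_and, false_or]
        by_cases h2a : p2 = a
        · subst h2a
          rw [hswa]
          constructor
          · rintro ⟨hy1, hy2, hlt⟩
            rw [hyi] at hy2; exact absurd hy2 (by simp)
          · rintro ⟨hy1, hy2, hlt⟩
            rw [hyi] at hy2; exact absurd hy2 (by simp)
        · by_cases h2b : p2 = b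
          · subst h2b
            rw [hswb]
            constructor
            · rintro ⟨hy1, hy2, hlt⟩; exact ⟨hy1, hy2, (key2 p1 h1a h1b).mpr hlt⟩
            · rintro ⟨hy1, hy2, hlt⟩; exact ⟨hy1, hy2, (key2 p1 h1a h1b).mp hlt⟩
          · rw [hswo p2 h2a h2b]
  rw [hset, card_insert_of_notMem]
  simp only [mem_filter, mem_univ, true_and, not_and, not_lt]
  intro _ _
  exact le_of_lt hsab

lemma empAUROC_swap {N : ℕ} (s : Fin N → ℝ) (y : Fin N → Bool) (hs : StrictMono s)
    (i : ℕ) (hi : i + 1 < N)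
    (hyi : y ⟨i, Nat.lt_of_succ_lt hi⟩ = true)
    (hyi1 : y ⟨i + 1, hi⟩ = false) :
    empAUROC y (s ∘ Equiv.swap ⟨i, Nat.lt_of_succ_lt hi⟩ ⟨i + 1, hi⟩)
      = (((univ.filter (fun p : Fin N × Fin N =>
          y p.1 = true ∧ y p.2 = false ∧ s p.2 < s p.1)).card + 1 : ℝ)) /
        (((univ.filter (fun k : Fin N => y k = true)).card : ℝ) *
          ((univ.filter (fun k : Fin N => y k = false)).card : ℝ)) := by
  rw [empAUROC, auroc_swap_count s y hs i hi hyi hyi1]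
  push_cast
  ring

/-- In a dataset of N distinct scores sorted in increasing order, if i and j
are both indices of incorrectly ranked adjacent pairs (label 1 at the lower-scored position
and label 0 at the next position), then the empirical AUROC after swapping the pair at i
equals the empirical AUROC after swapping the pair at j: AUROC(f_i') = AUROC(f_j'). -/
theorem auroc_fix_mistake_index_invariant {N : ℕ} (s : Fin N → ℝ) (y : Fin N → Bool)
    (hs : StrictMono s)
    (i j : ℕ) (hi : i + 1 < N) (hj : j + 1 < N)
    (hyi : y ⟨i, Nat.lt_of_succ_lt hi⟩ = true)
    (hyi1 : y ⟨i + 1, hi⟩ = false)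
    (hyj : y ⟨j, Nat.lt_of_succ_lt hj⟩ = true)
    (hyj1 : y ⟨j + 1, hj⟩ = false) :
    empAUROC y (s ∘ Equiv.swap ⟨i, Nat.lt_of_succ_lt hi⟩ ⟨i + 1, hi⟩)
      = empAUROC y (s ∘ Equiv.swap ⟨j, Nat.lt_of_succ_lt hj⟩ ⟨j + 1, hj⟩) := by
  rw [empAUROC_swap s y hs i hi hyi hyi1, empAUROC_swap s y hs j hj hyj hyj1]
end

section
/- In a sorted finite dataset with an incorrectly ranked adjacent pair at index i (y_i = 1, y_{i+1} = 0), swapping the scores of positions i and i+1 decreases the count of false positives at threshold t exactly when t equals the original score f(x_i) (by exactly one), and leaves the false positive count unchanged at every other threshold equal to some data point's score. -/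
/-
Swapping the scores of positions `a` and `b` only moves those two samples across a threshold `t`.
If `t` does not separate `f a` from `f b`, nothing changes. At `t = s i` the negative sample `i + 1`
drops from above the threshold to on it, while the positive sample `i` that moves above it is not
a false positive; any other data threshold lies on the same side of both `s i` and `s (i + 1)`.
-/

open Finset

/-- Number of false positives at threshold t (strict convention):
the number of negative-labeled samples whose score strictly exceeds t. -/
noncomputable def FPcount {N : ℕ} (y : Fin N → Bool) (f : Fin N → ℝ) (t : ℝ) : ℕ :=
  (univ.filter (fun k : Fin N => y k = false ∧ t < f k)).card

section Swap

variable {N : ℕ} (y : Fin N → Bool) (f : Fin N → ℝ) {a b : Fin N} {t : ℝ}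

lemma lt_comp_swap_iff_of_lt_iff (hab : t < f a ↔ t < f b) (k : Fin N) :
    t < (f ∘ Equiv.swap a b) k ↔ t < f k := by
  rw [Function.comp_apply, Equiv.swap_apply_def]
  split_ifs with hka hkb
  · rw [hka, hab]
  · rw [hkb, hab]
  · rfl

lemma FPcount_comp_swap_of_lt_iff (hab : t < f a ↔ t < f b) :
    FPcount y (f ∘ Equiv.swap a b) t = FPcount y f t := by
  unfold FPcount
  simp only [lt_comp_swap_iff_of_lt_iff f hab]

lemma FPcount_comp_swap_add_one (ya : y a = true) (yb : y b = false)
    (hta : ¬ t < f a) (htb : t < f b) :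
    FPcount y (f ∘ Equiv.swap a b) t + 1 = FPcount y f t := by
  have hab : a ≠ b := by rintro rfl; exact hta htb
  have hb_mem : b ∈ univ.filter (fun k => y k = false ∧ t < f k) := by simp [yb, htb]
  have h_erase : univ.filter (fun k => y k = false ∧ t < (f ∘ Equiv.swap a b) k)
      = (univ.filter (fun k => y k = false ∧ t < f k)).erase b := by
    ext k
    simp only [mem_filter, mem_erase, mem_univ, true_and, Function.comp_apply]
    rcases eq_or_ne k a with rfl | hka
    · simp [ya, hab]
    rcases eq_or_ne k b with rfl | hkb
    · simp [hta]
    · simp [Equiv.swap_apply_of_ne_of_ne hka hkb, hkb]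
  unfold FPcount
  rw [h_erase, card_erase_add_one hb_mem]

end Swap

/-- In a sorted dataset of distinct scores with an incorrectly ranked adjacent
pair at index i (y_i = 1, y_{i+1} = 0), swapping the scores at positions i and i+1 decreases
the false positive count by exactly one at the threshold s_i, and leaves the false positive
count unchanged at every other data point's (original) score threshold. -/
theorem swap_mistake_changes_FP_only_at_own_threshold {N : ℕ}
    (s : Fin N → ℝ) (y : Fin N → Bool)
    (hs : StrictMono s)
    (i : ℕ) (hi : i + 1 < N)
    (hyi : y ⟨i, Nat.lt_of_succ_lt hi⟩ = true)
    (hyi1 : y ⟨i + 1, hi⟩ = false) :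
    (FPcount y (s ∘ Equiv.swap ⟨i, Nat.lt_of_succ_lt hi⟩ ⟨i + 1, hi⟩)
        (s ⟨i, Nat.lt_of_succ_lt hi⟩) + 1
      = FPcount y s (s ⟨i, Nat.lt_of_succ_lt hi⟩)) ∧
    (∀ m : Fin N, (m : ℕ) ≠ i →
      FPcount y (s ∘ Equiv.swap ⟨i, Nat.lt_of_succ_lt hi⟩ ⟨i + 1, hi⟩) (s m)
        = FPcount y s (s m)) := by
  refine ⟨FPcount_comp_swap_add_one y s hyi hyi1 (lt_irrefl _)
    (hs (Fin.mk_lt_mk.mpr i.lt_succ_self)), fun m hm => ?_⟩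
  apply FPcount_comp_swap_of_lt_iff
  rw [hs.lt_iff_lt, hs.lt_iff_lt, Fin.lt_def, Fin.lt_def]
  dsimp only
  omega
end

section
/- If two samples x_i and x_j with f(x_i) = f(x_j) and discordant labels have their scores 'separated' so that the negative sample's score becomes strictly less than the positive sample's score (with no other sample's score in between), then the empirical AUROC strictly increases by 1/(n_P · n_N), and the empirical AUROC is unchanged if instead the two equal scores are merely swapped. -/
open Finset

/-- If a positive sample i and a negative sample j are tied (f(x_i) = f(x_j))
and the tie is 'separated' by moving only the negative sample's score strictly below the
positive sample's score without crossing any other sample's score, the empirical AUROC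
strictly increases by exactly 1/(n_P·n_N); while merely swapping the two equal scores
leaves the empirical AUROC unchanged. -/
theorem auroc_tie_separation {N : ℕ} (f g : Fin N → ℝ) (y : Fin N → Bool)
    (i j : Fin N) (hij : i ≠ j)
    (hyi : y i = true) (hyj : y j = false)
    (htie : f i = f j)
    (hg : ∀ k, k ≠ j → g k = f k)
    (hsep : g j < g i)
    (hnocross : ∀ k, k ≠ i → k ≠ j →
      ((f k < g j ↔ f k < f j) ∧ (g j < f k ↔ f j < f k)))
    (nP nN : ℕ)
    (hnP : nP = (univ.filter (fun k : Fin N => y k = true)).card)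
    (hnN : nN = (univ.filter (fun k : Fin N => y k = false)).card) :
    empAUROC y g = empAUROC y f + 1 / ((nP : ℝ) * (nN : ℝ)) ∧
    empAUROC y (f ∘ Equiv.swap i j) = empAUROC y f := by
  constructor
  · -- set equality
    have hset : (univ.filter (fun p : Fin N × Fin N =>
        y p.1 = true ∧ y p.2 = false ∧ g p.2 < g p.1)) =
        insert (i, j) (univ.filter (fun p : Fin N × Fin N =>
        y p.1 = true ∧ y p.2 = false ∧ f p.2 < f p.1)) := by
      ext p
      simp only [mem_filter, mem_insert, mem_univ, true_and]
      constructor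
      · rintro ⟨h1, h2, h3⟩
        have hp1j : p.1 ≠ j := by intro h; rw [h, hyj] at h1; exact Bool.noConfusion h1
        have hg1 : g p.1 = f p.1 := hg _ hp1j
        by_cases hp2 : p.2 = j
        · by_cases hp1 : p.1 = i
          · left; rw [Prod.ext_iff]; exact ⟨hp1, hp2⟩
          · right
            refine ⟨h1, h2, ?_⟩
            rw [hp2]
            have := (hnocross p.1 hp1 hp1j).2
            rw [hp2, hg1] at h3
            exact this.1 h3
        · right
          refine ⟨h1, h2, ?_⟩
          rw [← hg1, ← hg _ hp2]; exact h3
      · rintro (h | ⟨h1, h2, h3⟩)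
        · rw [h]
          exact ⟨hyi, hyj, hsep⟩
        · have hp1j : p.1 ≠ j := by intro h; rw [h, hyj] at h1; exact Bool.noConfusion h1
          have hg1 : g p.1 = f p.1 := hg _ hp1j
          refine ⟨h1, h2, ?_⟩
          by_cases hp2 : p.2 = j
          · rw [hp2] at h3 ⊢
            have hp1i : p.1 ≠ i := by
              intro h; rw [h, ← htie] at h3; exact lt_irrefl _ h3
            rw [hg1]
            exact ((hnocross p.1 hp1i hp1j).2).2 h3
          · rw [hg _ hp2, hg1]; exact h3
    have hnotmem : (i, j) ∉ (univ.filter (fun p : Fin N × Fin N =>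
        y p.1 = true ∧ y p.2 = false ∧ f p.2 < f p.1)) := by
      simp [htie]
    unfold empAUROC
    rw [hset, card_insert_of_notMem hnotmem, ← hnP, ← hnN]
    push_cast
    ring
  · have hfe : f ∘ Equiv.swap i j = f := by
      funext k
      simp only [Function.comp_apply]
      rcases eq_or_ne k i with rfl | hki
      · rw [Equiv.swap_apply_left, ← htie]
      rcases eq_or_ne k j with rfl | hkj
      · rw [Equiv.swap_apply_right, htie]
      · rw [Equiv.swap_apply_of_ne_of_ne hki hkj]
    rw [hfe]
end

section
/- Under the expectation formulations, AUROC(f) − AUPRC(f) = E_{t~s_+}[ FPR(t) · ( P(y=0)/P(f(x)>t) − 1 ) ]; in particular AUPRC ≤ AUROC whenever P(f(x) > t) ≤ P(y = 0) almost surely over positive-sample scores t, and AUPRC ≥ AUROC whenever P(f(x) > t) ≥ P(y = 0) almost surely over positive-sample scores t. -/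
open MeasureTheory

/-- Under the expectation formulations
AUROC = 1 − E_{t~s₊}[FPR(t)] and AUPRC = 1 − P(y=0)·E_{t~s₊}[FPR(t)/FR(t)] (density p₊ of
positive scores on (0,1), FR(t) = P(f(x) > t) > 0 on the support of s₊),
AUROC − AUPRC = E_{t~s₊}[FPR(t)·((1−py... i.e. P(y=0))/FR(t) − 1)]; in particular
AUPRC ≤ AUROC whenever FR(t) ≤ P(y=0) a.s. over positive scores, and AUPRC ≥ AUROC
whenever FR(t) ≥ P(y=0) a.s. over positive scores. -/
theorem auroc_auprc_difference
    (p_pos FPR FR : ℝ → ℝ) (py : ℝ)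
    (hpy0 : 0 < py) (hpy1 : py < 1)
    (hpos : ∀ t, 0 ≤ p_pos t)
    (hpos_one : (∫ t in (0:ℝ)..1, p_pos t) = 1)
    (hFPRnn : ∀ t, 0 ≤ FPR t)
    (hFRpos : ∀ t ∈ Set.Ioo (0:ℝ) 1, p_pos t ≠ 0 → 0 < FR t)
    (hint1 : IntervalIntegrable (fun t => FPR t * p_pos t) volume 0 1)
    (hint2 : IntervalIntegrable (fun t => (FPR t / FR t) * p_pos t) volume 0 1)
    (hint3 : IntervalIntegrable
      (fun t => FPR t * ((1 - py) / FR t - 1) * p_pos t) volume 0 1) :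
    ((1 - ∫ t in (0:ℝ)..1, FPR t * p_pos t)
        - (1 - (1 - py) * ∫ t in (0:ℝ)..1, (FPR t / FR t) * p_pos t)
      = ∫ t in (0:ℝ)..1, FPR t * ((1 - py) / FR t - 1) * p_pos t) ∧
    ((∀ t ∈ Set.Ioo (0:ℝ) 1, p_pos t ≠ 0 → FR t ≤ 1 - py) →
      1 - (1 - py) * (∫ t in (0:ℝ)..1, (FPR t / FR t) * p_pos t)
        ≤ 1 - ∫ t in (0:ℝ)..1, FPR t * p_pos t) ∧
    ((∀ t ∈ Set.Ioo (0:ℝ) 1, p_pos t ≠ 0 → 1 - py ≤ FR t) →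
      1 - (∫ t in (0:ℝ)..1, FPR t * p_pos t)
        ≤ 1 - (1 - py) * ∫ t in (0:ℝ)..1, (FPR t / FR t) * p_pos t) := by
    -- pointwise identity
  have hpt : ∀ t, FPR t * ((1 - py) / FR t - 1) * p_pos t
      = (1 - py) * ((FPR t / FR t) * p_pos t) - FPR t * p_pos t := by
    intro t; ring
  have heq : (∫ t in (0:ℝ)..1, FPR t * ((1 - py) / FR t - 1) * p_pos t)
      = (1 - py) * (∫ t in (0:ℝ)..1, (FPR t / FR t) * p_pos t)
        - ∫ t in (0:ℝ)..1, FPR t * p_pos t := by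
    rw [show (fun t => FPR t * ((1 - py) / FR t - 1) * p_pos t)
        = fun t => (1 - py) * ((FPR t / FR t) * p_pos t) - FPR t * p_pos t
      from funext hpt]
    rw [intervalIntegral.integral_sub (hint2.const_mul _) hint1,
      intervalIntegral.integral_const_mul]
  have key : ∀ (c : ℝ → ℝ), (∀ t ∈ Set.Ioo (0:ℝ) 1, 0 ≤ c t) →
      (∀ t, c t = FPR t * ((1 - py) / FR t - 1) * p_pos t ∨
        c t = -(FPR t * ((1 - py) / FR t - 1) * p_pos t)) → True := fun _ _ _ => trivial
  refine ⟨by rw [heq]; ring, ?_, ?_⟩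
  · intro h
    have hnn : 0 ≤ ∫ t in (0:ℝ)..1, FPR t * ((1 - py) / FR t - 1) * p_pos t := by
      rw [intervalIntegral.integral_of_le (by norm_num : (0:ℝ) ≤ 1)]
      rw [← Measure.restrict_congr_set Ioo_ae_eq_Ioc]
      refine integral_nonneg_of_ae (ae_restrict_of_forall_mem measurableSet_Ioo ?_)
      intro t ht
      by_cases hp : p_pos t = 0
      · simp [hp]
      · have hFR := hFRpos t ht hp
        have h1 : (1:ℝ) ≤ (1 - py) / FR t :=
          (le_div_iff₀ hFR).mpr (by simpa using h t ht hp)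
        have h2 : 0 ≤ (1 - py) / FR t - 1 := by linarith
        show (0:ℝ→ℝ) t ≤ FPR t * ((1 - py) / FR t - 1) * p_pos t
        simpa using mul_nonneg (mul_nonneg (hFPRnn t) h2) (hpos t)
    rw [heq] at hnn; linarith
  · intro h
    have hnp : (∫ t in (0:ℝ)..1, FPR t * ((1 - py) / FR t - 1) * p_pos t) ≤ 0 := by
      rw [intervalIntegral.integral_of_le (by norm_num : (0:ℝ) ≤ 1)]
      rw [← Measure.restrict_congr_set Ioo_ae_eq_Ioc]
      refine integral_nonpos_of_ae (ae_restrict_of_forall_mem measurableSet_Ioo ?_)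
      intro t ht
      by_cases hp : p_pos t = 0
      · simp [hp]
      · have hFR := hFRpos t ht hp
        have h1 : (1 - py) / FR t ≤ 1 :=
          (div_le_one hFR).mpr (by simpa using h t ht hp)
        have h2 : (1 - py) / FR t - 1 ≤ 0 := by linarith
        show FPR t * ((1 - py) / FR t - 1) * p_pos t ≤ (0:ℝ→ℝ) t
        have := mul_nonneg (hFPRnn t) (hpos t)
        simp only [Pi.zero_apply]
        nlinarith
    rw [heq] at hnp; linarith
end
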